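/- arXiv:2110.09102 — 2 statements merged into one kernel-verified Lean document; each statement's English description precedes it below -/
import Mathlib

section
/- If A and B are small tight sets in a k-connected graph G (tight meaning |∂A| = k and A* ≠ ∅; small meaning |A| ≤ (n−k)/2) and A ∩ B ≠ ∅, then A ∩ B is a tight set. -/
open Set

variable {V : Type*} [Fintype V] [DecidableEq V]

/-- The boundary (neighborhood) of a vertex set: vertices outside `A` adjacent to `A`. -/
def bdry (G : SimpleGraph V) (A : Set V) : Set V := {v | v ∉ A ∧ ∃ a ∈ A, G.Adj a v}

/-- The "node complement" `A* = V \ (A ∪ ∂A)`. -/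
def nstar (G : SimpleGraph V) (A : Set V) : Set V := (A ∪ bdry G A)ᶜ

/-- `C` is a vertex set separating `s` from `t`. -/
def IsSep (G : SimpleGraph V) (s t : V) (C : Set V) : Prop :=
  s ∉ C ∧ t ∉ C ∧ ∀ p : G.Walk s t, ∃ v ∈ C, v ∈ p.support

/-- `κ(s,t)`: minimum size of an `s`–`t` vertex cut. -/
noncomputable def kappa (G : SimpleGraph V) (s t : V) : ℕ :=
  sInf {n | ∃ C : Set V, C.ncard = n ∧ IsSep G s t C}

/-- A set is tight if `|∂A| = k` and `A* ≠ ∅`. -/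
def Tight (G : SimpleGraph V) (k : ℕ) (A : Set V) : Prop :=
  (bdry G A).ncard = k ∧ (nstar G A).Nonempty

/-- A set is small if `|A| ≤ (n - k)/2`. -/
def SmallSet (k : ℕ) (A : Set V) : Prop := 2 * A.ncard + k ≤ Fintype.card V

/-- `G` is `k`-connected. -/
def KConn (G : SimpleGraph V) (k : ℕ) : Prop :=
  k + 1 ≤ Fintype.card V ∧
    ∀ s t : V, s ≠ t → ∀ C : Set V, IsSep G s t C → k ≤ C.ncard

/-- degree of a vertex -/
noncomputable def deg (G : SimpleGraph V) (v : V) : ℕ := (G.neighborSet v).ncard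

/-- `X` is an `st`-tight set: `s ∈ X`, `t ∈ X*` and `|∂X| = κ(s,t)`. -/
def TightST (G : SimpleGraph V) (s t : V) (X : Set V) : Prop :=
  s ∈ X ∧ t ∈ nstar G X ∧ (bdry G X).ncard = kappa G s t

/-- `R_s`: intersection of all small tight sets containing `s`. -/
def Rmin (G : SimpleGraph V) (k : ℕ) (s : V) : Set V :=
  ⋂₀ {A : Set V | Tight G k A ∧ SmallSet k A ∧ s ∈ A}

/-- Two sets are laminar if disjoint or one contains the other. -/
def Laminar (X Y : Set V) : Prop := Disjoint X Y ∨ X ⊆ Y ∨ Y ⊆ X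

/-- `d`-degeneracy: every nonempty vertex subset has a vertex with at most `d`
neighbors inside it. -/
def Degenerate (G : SimpleGraph V) (d : ℕ) : Prop :=
  ∀ W : Set V, W.Nonempty → ∃ v ∈ W, (G.neighborSet v ∩ W).ncard ≤ d

/-- The set of vertices reachable from `s` avoiding `C`. -/
def Reach (G : SimpleGraph V) (C : Set V) (s : V) : Set V :=
  {v | ∃ p : G.Walk s v, ∀ u ∈ p.support, u ∉ C}

lemma walk_hits_bdry (G : SimpleGraph V) (S : Set V) {s t : V} (p : G.Walk s t) :
    s ∈ S → t ∉ S ∪ bdry G S → ∃ v ∈ bdry G S, v ∈ p.support := by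
  induction p with
  | nil => intro hs ht; exact absurd (Or.inl hs) ht
  | @cons s u t h q ih =>
    intro hs ht
    by_cases hu : u ∈ S
    · obtain ⟨v, hv, hvs⟩ := ih hu ht
      exact ⟨v, hv, by simp [hvs]⟩
    · exact ⟨u, ⟨hu, s, hs, h⟩, by simp⟩

lemma bdry_isSep (G : SimpleGraph V) (S : Set V) {s t : V} (hs : s ∈ S)
    (ht : t ∈ nstar G S) : IsSep G s t (bdry G S) := by
  have ht' : t ∉ S ∪ bdry G S := ht
  refine ⟨fun hc => hc.1 hs, fun hc => ht' (Or.inr hc), fun p => walk_hits_bdry G S p hs ht'⟩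

lemma k_le_bdry (G : SimpleGraph V) (k : ℕ) (hG : KConn G k) (S : Set V)
    (hS : S.Nonempty) (hS' : (nstar G S).Nonempty) : k ≤ (bdry G S).ncard := by
  obtain ⟨s, hs⟩ := hS
  obtain ⟨t, ht⟩ := hS'
  have hne : s ≠ t := by
    rintro rfl
    exact ht (Or.inl hs)
  exact hG.2 s t hne _ (bdry_isSep G S hs ht)

lemma bdry_submod (G : SimpleGraph V) (A B : Set V) :
    (bdry G (A ∩ B)).ncard + (bdry G (A ∪ B)).ncard ≤
      (bdry G A).ncard + (bdry G B).ncard := by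
  have h1 : bdry G (A ∩ B) ∪ bdry G (A ∪ B) ⊆ bdry G A ∪ bdry G B := by
    rintro v (⟨hv, a, ⟨haA, haB⟩, hadj⟩ | ⟨hv, a, ha, hadj⟩)
    · by_cases hvA : v ∈ A
      · exact Or.inr ⟨fun hvB => hv ⟨hvA, hvB⟩, a, haB, hadj⟩
      · exact Or.inl ⟨hvA, a, haA, hadj⟩
    · rcases ha with ha | ha
      · exact Or.inl ⟨fun hc => hv (Or.inl hc), a, ha, hadj⟩
      · exact Or.inr ⟨fun hc => hv (Or.inr hc), a, ha, hadj⟩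
  have h2 : bdry G (A ∩ B) ∩ bdry G (A ∪ B) ⊆ bdry G A ∩ bdry G B := by
    rintro v ⟨⟨_, a, ⟨haA, haB⟩, hadj⟩, hv2, _⟩
    exact ⟨⟨fun hc => hv2 (Or.inl hc), a, haA, hadj⟩,
           ⟨fun hc => hv2 (Or.inr hc), a, haB, hadj⟩⟩
  calc (bdry G (A ∩ B)).ncard + (bdry G (A ∪ B)).ncard
      = (bdry G (A ∩ B) ∪ bdry G (A ∪ B)).ncard
        + (bdry G (A ∩ B) ∩ bdry G (A ∪ B)).ncard := by
        rw [Set.ncard_union_add_ncard_inter _ _ (Set.toFinite _) (Set.toFinite _)]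
    _ ≤ (bdry G A ∪ bdry G B).ncard + (bdry G A ∩ bdry G B).ncard := by
        exact add_le_add (Set.ncard_le_ncard h1 (Set.toFinite _)) (Set.ncard_le_ncard h2 (Set.toFinite _))
    _ = (bdry G A).ncard + (bdry G B).ncard :=
        Set.ncard_union_add_ncard_inter _ _ (Set.toFinite _) (Set.toFinite _)

lemma nstar_inter_supset (G : SimpleGraph V) (A B : Set V) :
    nstar G A ⊆ nstar G (A ∩ B) := by
  intro v hv hc
  rcases hc with hc | ⟨hv2, a, ⟨haA, _⟩, hadj⟩
  · exact hv (Or.inl hc.1)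
  · by_cases hvA : v ∈ A
    · exact hv (Or.inl hvA)
    · exact hv (Or.inr ⟨hvA, a, haA, hadj⟩)

theorem stmt1 (G : SimpleGraph V) (k : ℕ) (A B : Set V) (hG : KConn G k)
    (hA : Tight G k A) (hA' : SmallSet k A) (hB : Tight G k B) (hB' : SmallSet k B)
    (h : (A ∩ B).Nonempty) : Tight G k (A ∩ B) := by
  have hnsAB : (nstar G (A ∩ B)).Nonempty := hA.2.mono (nstar_inter_supset G A B)
  -- lower bound for ∂(A∩B)
  have hlo : k ≤ (bdry G (A ∩ B)).ncard := k_le_bdry G k hG _ h hnsAB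
  -- submodularity
  have hsub := bdry_submod G A B
  rw [hA.1, hB.1] at hsub
  -- ∂(A∪B) ≤ k
  have hUle : (bdry G (A ∪ B)).ncard ≤ k := by omega
  -- nstar (A∪B) nonempty
  have hcard : ((A ∪ B) ∪ bdry G (A ∪ B)).ncard < Fintype.card V := by
    have h1 : ((A ∪ B) ∪ bdry G (A ∪ B)).ncard ≤ (A ∪ B).ncard + (bdry G (A ∪ B)).ncard :=
      Set.ncard_union_le _ _
    have h2 : (A ∪ B).ncard + (A ∩ B).ncard = A.ncard + B.ncard :=
      Set.ncard_union_add_ncard_inter _ _ (Set.toFinite _) (Set.toFinite _)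
    have h3 : 1 ≤ (A ∩ B).ncard := (Set.ncard_pos (Set.toFinite _)).2 h
    have hAn := hA'
    have hBn := hB'
    unfold SmallSet at hAn hBn
    omega
  have hnsU : (nstar G (A ∪ B)).Nonempty := by
    rw [nstar]
    rw [Set.nonempty_compl]
    intro hc
    rw [hc, Set.ncard_univ, Nat.card_eq_fintype_card] at hcard
    omega
  have hUnonempty : (A ∪ B).Nonempty := h.mono (Set.inter_subset_left.trans Set.subset_union_left)
  have hUlo : k ≤ (bdry G (A ∪ B)).ncard := k_le_bdry G k hG _ hUnonempty hnsU
  exact ⟨by omega, hnsAB⟩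
end

section
/- Let s, t be vertices of a k-connected graph G with st ∉ E and both s, t of degree > k. Then κ(s,t) = k if and only if (s lies in a small tight set and the minimal small tight set R_s containing s satisfies t ∈ R_s*) or (t lies in a small tight set and the minimal small tight set R_t containing t satisfies s ∈ R_t*). -/
open Set

variable {V : Type*} [Fintype V] [DecidableEq V]

/-!
Both directions go through `s`–`t` separators of size `k`, which are exactly what
`κ(s,t) = k` means in a `k`-connected graph. If `R_s` is a small tight set with
`t ∈ R_s*`, then `∂R_s` is such a separator. Conversely, a separator `C` of size `k`
cuts off the components `A ∋ s` and `B ∋ t` of `G - C`; both are tight, and since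
`|A| + |B| + k ≤ n` one of them is small, say `A`. Then `R_s ⊆ A`, hence `t ∈ A* ⊆ R_s*`.
That `R_s` is itself a small tight set follows from the submodularity of `|∂·|`:
two small tight sets that meet have a tight intersection.
-/

section

omit [DecidableEq V]

variable {G : SimpleGraph V} {k : ℕ} {s t : V} {A B C X : Set V}

section

omit [Fintype V]

lemma mem_nstar {v : V} : v ∈ nstar G X ↔ v ∉ X ∧ v ∉ bdry G X := by
  simp [nstar]

lemma nstar_anti (h : A ⊆ B) : nstar G B ⊆ nstar G A := by
  refine compl_subset_compl.2 ?_
  rintro v (hv | ⟨hv, a, ha, hadj⟩)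
  · exact Or.inl (h hv)
  · by_cases hvB : v ∈ B
    · exact Or.inl hvB
    · exact Or.inr ⟨hvB, a, h ha, hadj⟩

lemma SimpleGraph.Walk.exists_mem_bdry_mem_support {a b : V} (p : G.Walk a b)
    (ha : a ∈ X) (hb : b ∉ X) : ∃ v ∈ bdry G X, v ∈ p.support := by
  obtain ⟨d, hd, hfst, hsnd⟩ := p.exists_boundary_dart X ha hb
  exact ⟨d.snd, ⟨hsnd, d.fst, hfst, d.adj⟩, p.dart_snd_mem_support_of_mem_darts hd⟩

lemma isSep_bdry (hs : s ∈ X) (ht : t ∈ nstar G X) : IsSep G s t (bdry G X) := by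
  obtain ⟨htX, htb⟩ := mem_nstar.1 ht
  exact ⟨fun h => h.1 hs, htb, fun p => p.exists_mem_bdry_mem_support hs htX⟩

lemma IsSep.symm (h : IsSep G s t C) : IsSep G t s C := by
  refine ⟨h.2.1, h.1, fun p => ?_⟩
  obtain ⟨v, hvC, hv⟩ := h.2.2 p.reverse
  exact ⟨v, hvC, by simpa using hv⟩

lemma bdry_inter_subset : bdry G (A ∩ B) ⊆
    bdry G A ∩ B ∪ bdry G B ∩ A ∪ (bdry G A ∩ bdry G B) \ (A ∪ B) := by
  rintro v ⟨hv, a, ⟨haA, haB⟩, hadj⟩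
  by_cases hvB : v ∈ B
  · exact Or.inl (Or.inl ⟨⟨fun hvA => hv ⟨hvA, hvB⟩, a, haA, hadj⟩, hvB⟩)
  by_cases hvA : v ∈ A
  · exact Or.inl (Or.inr ⟨⟨hvB, a, haB, hadj⟩, hvA⟩)
  · exact Or.inr ⟨⟨⟨hvA, a, haA, hadj⟩, ⟨hvB, a, haB, hadj⟩⟩,
      fun h => h.elim hvA hvB⟩

lemma bdry_union_subset : bdry G (A ∪ B) ⊆ (bdry G A ∪ bdry G B) \ (A ∪ B) := by
  rintro v ⟨hv, a, ha | ha, hadj⟩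
  · exact ⟨Or.inl ⟨fun h => hv (Or.inl h), a, ha, hadj⟩, hv⟩
  · exact ⟨Or.inr ⟨fun h => hv (Or.inr h), a, ha, hadj⟩, hv⟩

lemma ncard_inter_add_ncard_diff_le [Finite V] {S T U : Set V} (hTU : T ⊆ U) :
    (S ∩ T).ncard + (S \ U).ncard ≤ S.ncard := by
  rw [← ncard_union_eq (disjoint_left.2 fun _ h h' => h'.2 (hTU h.2))]
  exact ncard_le_ncard (union_subset inter_subset_left sdiff_subset)

lemma ncard_bdry_inter_add_ncard_bdry_union_le [Finite V] :
    (bdry G (A ∩ B)).ncard + (bdry G (A ∪ B)).ncard ≤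
      (bdry G A).ncard + (bdry G B).ncard := by
  set SA := bdry G A
  set SB := bdry G B
  have hinter : (bdry G (A ∩ B)).ncard ≤
      (SA ∩ B).ncard + (SB ∩ A).ncard + ((SA ∩ SB) \ (A ∪ B)).ncard :=
    (ncard_le_ncard bdry_inter_subset).trans <|
      (ncard_union_le _ _).trans (by gcongr; exact ncard_union_le _ _)
  have hunion : (bdry G (A ∪ B)).ncard ≤ ((SA ∪ SB) \ (A ∪ B)).ncard :=
    ncard_le_ncard bdry_union_subset
  have hmodular : ((SA ∩ SB) \ (A ∪ B)).ncard + ((SA ∪ SB) \ (A ∪ B)).ncard =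
      (SA \ (A ∪ B)).ncard + (SB \ (A ∪ B)).ncard := by
    rw [show (SA ∩ SB) \ (A ∪ B) = (SA \ (A ∪ B)) ∩ (SB \ (A ∪ B)) from inf_sdiff,
      union_sdiff_distrib]
    exact ncard_inter_add_ncard_union _ _
  have hA := ncard_inter_add_ncard_diff_le (S := SA) (subset_union_right (s := A) (t := B))
  have hB := ncard_inter_add_ncard_diff_le (S := SB) (subset_union_left (s := A) (t := B))
  omega

lemma disjoint_reach : Disjoint (Reach G C s) C :=
  disjoint_left.2 fun _ ⟨p, hp⟩ => hp _ p.end_mem_support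

lemma bdry_reach_subset : bdry G (Reach G C s) ⊆ C := by
  rintro v ⟨hv, a, ⟨p, hp⟩, hadj⟩
  by_contra hvC
  refine hv ⟨p.concat hadj, fun u hu => ?_⟩
  rw [SimpleGraph.Walk.support_concat, List.mem_append, List.mem_singleton] at hu
  rcases hu with hu | rfl
  · exact hp u hu
  · exact hvC

lemma IsSep.mem_reach (hC : IsSep G s t C) : s ∈ Reach G C s :=
  ⟨.nil, by simpa using hC.1⟩

lemma IsSep.mem_nstar_reach (hC : IsSep G s t C) : t ∈ nstar G (Reach G C s) := by
  refine mem_nstar.2 ⟨fun ⟨p, hp⟩ => ?_, fun h => hC.2.1 (bdry_reach_subset h)⟩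
  obtain ⟨v, hvC, hv⟩ := hC.2.2 p
  exact hp v hv hvC

lemma IsSep.disjoint_reach_reach (hC : IsSep G s t C) : Disjoint (Reach G C s) (Reach G C t) := by
  refine disjoint_left.2 fun v ⟨p, hp⟩ ⟨q, hq⟩ => ?_
  obtain ⟨w, hwC, hw⟩ := hC.2.2 (p.append q.reverse)
  rw [SimpleGraph.Walk.mem_support_append_iff, SimpleGraph.Walk.support_reverse,
    List.mem_reverse] at hw
  rcases hw with hw | hw
  · exact hp w hw hwC
  · exact hq w hw hwC

lemma kappa_le_ncard (hC : IsSep G s t C) : kappa G s t ≤ C.ncard :=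
  Nat.sInf_le ⟨C, rfl, hC⟩

/-- Outside this case there is no separator and `kappa` is the junk value `sInf ∅ = 0`. -/
lemma exists_isSep_ncard_eq_kappa (hst : ¬ G.Adj s t) (hne : s ≠ t) :
    ∃ C : Set V, IsSep G s t C ∧ C.ncard = kappa G s t := by
  have hsep : IsSep G s t ({s, t}ᶜ) := by
    refine ⟨by simp, by simp, fun p => ?_⟩
    cases p with
    | nil => exact absurd rfl hne
    | @cons _ v _ hadj _ =>
      refine ⟨v, ?_, by simp⟩
      simp only [mem_compl_iff, mem_insert_iff, mem_singleton_iff, not_or]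
      exact ⟨fun h => G.irrefl (h ▸ hadj), fun h => hst (h ▸ hadj)⟩
  obtain ⟨C, hCk, hC⟩ := Nat.sInf_mem (s := {n | ∃ C : Set V, C.ncard = n ∧ IsSep G s t C})
    ⟨_, _, rfl, hsep⟩
  exact ⟨C, hC, hCk⟩

end

lemma nstar_nonempty_of_ncard_add_lt
    (h : X.ncard + (bdry G X).ncard < Fintype.card V) : (nstar G X).Nonempty := by
  by_contra hempty
  rw [not_nonempty_iff_eq_empty, nstar, compl_empty_iff] at hempty
  have := ncard_union_le X (bdry G X)
  rw [hempty, ncard_univ, Nat.card_eq_fintype_card] at this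
  omega

lemma KConn.le_ncard_bdry (hG : KConn G k) (hX : X.Nonempty)
    (hX' : (nstar G X).Nonempty) : k ≤ (bdry G X).ncard := by
  obtain ⟨a, ha⟩ := hX
  obtain ⟨b, hb⟩ := hX'
  exact hG.2 a b (fun h => (mem_nstar.1 hb).1 (h ▸ ha)) _ (isSep_bdry ha hb)

lemma SmallSet.mono (hB : SmallSet k B) (hAB : A ⊆ B) : SmallSet k A := by
  have := ncard_le_ncard hAB
  unfold SmallSet at hB ⊢
  omega

lemma Tight.inter (hG : KConn G k) (hA : Tight G k A) (hAs : SmallSet k A)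
    (hB : Tight G k B) (hBs : SmallSet k B) (hAB : (A ∩ B).Nonempty) : Tight G k (A ∩ B) := by
  have hstar : (nstar G (A ∩ B)).Nonempty := hA.2.mono (nstar_anti inter_subset_left)
  have hk_inter : k ≤ (bdry G (A ∩ B)).ncard := hG.le_ncard_bdry hAB hstar
  have hsub : (bdry G (A ∩ B)).ncard + (bdry G (A ∪ B)).ncard ≤ k + k :=
    ncard_bdry_inter_add_ncard_bdry_union_le.trans_eq (by rw [hA.1, hB.1])
  have hcard : (A ∪ B).ncard + 1 ≤ A.ncard + B.ncard := by
    have := ncard_inter_add_ncard_union A B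
    have := (ncard_pos (toFinite _)).2 hAB
    omega
  have hstar_union : (nstar G (A ∪ B)).Nonempty := by
    apply nstar_nonempty_of_ncard_add_lt
    unfold SmallSet at hAs hBs
    omega
  have hk_union :=
    hG.le_ncard_bdry (hAB.mono (inter_subset_left.trans subset_union_left)) hstar_union
  exact ⟨by omega, hstar⟩

lemma rmin_mem (hG : KConn G k) (hex : ∃ A : Set V, Tight G k A ∧ SmallSet k A ∧ s ∈ A) :
    Tight G k (Rmin G k s) ∧ SmallSet k (Rmin G k s) ∧ s ∈ Rmin G k s := by
  set F : Set (Set V) := {A | Tight G k A ∧ SmallSet k A ∧ s ∈ A}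
  have hF : InfClosed F := by
    rintro A ⟨hA, hAs, hsA⟩ B ⟨hB, hBs, hsB⟩
    exact ⟨hA.inter hG hAs hB hBs ⟨s, hsA, hsB⟩, hAs.mono inter_subset_left, hsA, hsB⟩
  have hmem := hF.finsetInf_mem (t := (toFinite F).toFinset) (f := id)
    ((toFinite F).toFinset_nonempty.2 hex) (fun A hA => by simpa using hA)
  rwa [Finset.inf_id_set_eq_sInter, Finite.coe_toFinset] at hmem

lemma mem_nstar_rmin (hA : Tight G k A ∧ SmallSet k A ∧ s ∈ A)
    (ht : t ∈ nstar G A) : t ∈ nstar G (Rmin G k s) :=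
  nstar_anti (sInter_subset_of_mem hA) ht

lemma IsSep.tight_reach (hG : KConn G k) (hC : IsSep G s t C) (hCk : C.ncard = k) :
    Tight G k (Reach G C s) := by
  have hstar : (nstar G (Reach G C s)).Nonempty := ⟨t, hC.mem_nstar_reach⟩
  have hle : (bdry G (Reach G C s)).ncard ≤ k := hCk ▸ ncard_le_ncard bdry_reach_subset
  exact ⟨le_antisymm hle (hG.le_ncard_bdry ⟨s, hC.mem_reach⟩ hstar), hstar⟩

lemma IsSep.smallSet_reach_or (hC : IsSep G s t C) (hCk : C.ncard = k) :
    SmallSet k (Reach G C s) ∨ SmallSet k (Reach G C t) := by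
  have hdisj : Disjoint (Reach G C s ∪ Reach G C t) C :=
    disjoint_union_left.2 ⟨disjoint_reach, disjoint_reach⟩
  have hcard := ncard_le_ncard (subset_univ (Reach G C s ∪ Reach G C t ∪ C))
  rw [ncard_univ, Nat.card_eq_fintype_card, ncard_union_eq hdisj,
    ncard_union_eq hC.disjoint_reach_reach] at hcard
  unfold SmallSet
  omega

lemma IsSep.exists_small_tight (hG : KConn G k) (hC : IsSep G s t C) (hCk : C.ncard = k) :
    (∃ A : Set V, (Tight G k A ∧ SmallSet k A ∧ s ∈ A) ∧ t ∈ nstar G A) ∨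
      (∃ B : Set V, (Tight G k B ∧ SmallSet k B ∧ t ∈ B) ∧ s ∈ nstar G B) := by
  rcases hC.smallSet_reach_or hCk with hA | hB
  · exact Or.inl ⟨_, ⟨hC.tight_reach hG hCk, hA, hC.mem_reach⟩, hC.mem_nstar_reach⟩
  · exact Or.inr ⟨_, ⟨hC.symm.tight_reach hG hCk, hB, hC.symm.mem_reach⟩,
      hC.symm.mem_nstar_reach⟩

lemma KConn.kappa_eq_iff (hG : KConn G k) (hst : ¬ G.Adj s t) (hne : s ≠ t) :
    kappa G s t = k ↔ ∃ C : Set V, IsSep G s t C ∧ C.ncard = k := by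
  obtain ⟨C₀, hC₀, hC₀k⟩ := exists_isSep_ncard_eq_kappa hst hne
  refine ⟨fun h => ⟨C₀, hC₀, hC₀k.trans h⟩, fun ⟨C, hC, hCk⟩ => ?_⟩
  exact le_antisymm (hCk ▸ kappa_le_ncard hC) (hC₀k ▸ hG.2 s t hne C₀ hC₀)

end

theorem stmt3_general (G : SimpleGraph V) (k : ℕ) (s t : V) (hG : KConn G k)
    (hst : ¬ G.Adj s t) (hne : s ≠ t) :
    kappa G s t = k ↔
      ((∃ A : Set V, Tight G k A ∧ SmallSet k A ∧ s ∈ A) ∧ t ∈ nstar G (Rmin G k s)) ∨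
      ((∃ A : Set V, Tight G k A ∧ SmallSet k A ∧ t ∈ A) ∧ s ∈ nstar G (Rmin G k t)) := by
  rw [hG.kappa_eq_iff hst hne]
  constructor
  · rintro ⟨C, hC, hCk⟩
    rcases hC.exists_small_tight hG hCk with ⟨A, hA, ht⟩ | ⟨B, hB, hs⟩
    · exact Or.inl ⟨⟨A, hA⟩, mem_nstar_rmin hA ht⟩
    · exact Or.inr ⟨⟨B, hB⟩, mem_nstar_rmin hB hs⟩
  · rintro (⟨hex, ht⟩ | ⟨hex, hs⟩)
    · obtain ⟨⟨hk, _⟩, _, hsR⟩ := rmin_mem hG hex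
      exact ⟨_, isSep_bdry hsR ht, hk⟩
    · obtain ⟨⟨hk, _⟩, _, htR⟩ := rmin_mem hG hex
      exact ⟨_, (isSep_bdry htR hs).symm, hk⟩

theorem stmt3 (G : SimpleGraph V) (k : ℕ) (s t : V) (hG : KConn G k)
    (hst : ¬ G.Adj s t) (hne : s ≠ t) (hds : k < deg G s) (hdt : k < deg G t) :
    kappa G s t = k ↔
      ((∃ A : Set V, Tight G k A ∧ SmallSet k A ∧ s ∈ A) ∧ t ∈ nstar G (Rmin G k s)) ∨
      ((∃ A : Set V, Tight G k A ∧ SmallSet k A ∧ t ∈ A) ∧ s ∈ nstar G (Rmin G k t)) :=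
  stmt3_general G k s t hG hst hne
end
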